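/- Let D ≥ 2 be a squarefree integer with D ≡ 2 (mod 8), and let ℤ_K = ℤ[√D] be the ring of integers of K = ℚ(√D). Then the unit group (ℤ_K/4ℤ_K)ˣ is isomorphic to C₄ × C₂; moreover the class of 1 + √D in (ℤ_K/4ℤ_K)ˣ has order 4, the class of 1 + D has order 2, and these two classes together generate (ℤ_K/4ℤ_K)ˣ. -/

import Mathlib

/-!
Writing `ℤ_K = ℤ ⊕ ℤ s` with `s² = D`, the elements `1, s` are independent because `D ≡ 2 (mod 4)`
is not a square, so `ℤ_K ≅ ℤ[√D]` and `ℤ_K / 4 ≅ (ℤ/4)[ω] / (ω² - 2)`, a ring with 16 elements.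
In it `1 + ω` is a unit of order 4 (its inverse is `ω - 1`), `1 + D ≡ -1` has order 2, and the
two generate the 8 units, which forces `C₄ × C₂`.
-/

open NumberField QuadraticAlgebra

theorem Int.ne_mul_self_of_cast_zmod_four_eq_two {d : ℤ} (hd : (d : ZMod 4) = 2) (n : ℤ) :
    d ≠ n * n := by
  rintro rfl
  push_cast at hd
  revert hd
  generalize (n : ZMod 4) = x
  decide +revert

namespace Zsqrtd

variable {d : ℤ}

def reduceMod (N : ℕ) {a : ZMod N} (ha : (d : ZMod N) = a) :
    ℤ√d →+* QuadraticAlgebra (ZMod N) a 0 :=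
  lift ⟨ω, by ext <;> simp [ha]⟩

theorem reduceMod_apply (N : ℕ) {a : ZMod N} (ha : (d : ZMod N) = a) (x : ℤ√d) :
    reduceMod N ha x = ⟨x.re, x.im⟩ := by
  ext <;> simp [reduceMod]

theorem reduceMod_surjective (N : ℕ) {a : ZMod N} (ha : (d : ZMod N) = a) :
    Function.Surjective (reduceMod N ha) := by
  rintro ⟨u, v⟩
  obtain ⟨x, rfl⟩ := ZMod.intCast_surjective u
  obtain ⟨y, rfl⟩ := ZMod.intCast_surjective v
  exact ⟨⟨x, y⟩, reduceMod_apply N ha _⟩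

theorem ker_reduceMod (N : ℕ) {a : ZMod N} (ha : (d : ZMod N) = a) :
    RingHom.ker (reduceMod N ha) = Ideal.span {(N : ℤ√d)} := by
  ext x
  rw [RingHom.mem_ker, Ideal.mem_span_singleton, ← Int.cast_natCast, intCast_dvd,
    reduceMod_apply, QuadraticAlgebra.ext_iff]
  simp [ZMod.intCast_zmod_eq_zero_iff_dvd]

noncomputable def quotientSpanNatEquiv (N : ℕ) {a : ZMod N} (ha : (d : ZMod N) = a) :
    ℤ√d ⧸ Ideal.span {(N : ℤ√d)} ≃+* QuadraticAlgebra (ZMod N) a 0 :=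
  (Ideal.quotEquivOfEq (ker_reduceMod N ha).symm).trans
    (RingHom.quotientKerEquivOfSurjective (reduceMod_surjective N ha))

theorem quotientSpanNatEquiv_mk (N : ℕ) {a : ZMod N} (ha : (d : ZMod N) = a) (x : ℤ√d) :
    quotientSpanNatEquiv N ha (Ideal.Quotient.mk _ x) = reduceMod N ha x := by
  simp [quotientSpanNatEquiv, Ideal.quotEquivOfEq_mk,
    RingHom.quotientKerEquivOfSurjective_apply_mk]

variable {A : Type*} [CommRing A] [CharZero A]

noncomputable def liftRingEquiv (hd : ∀ n : ℤ, d ≠ n * n) {s : A} (hs : s * s = d)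
    (hgen : ∀ x : A, ∃ a b : ℤ, x = a + b * s) : ℤ√d ≃+* A :=
  RingEquiv.ofBijective (lift ⟨s, hs⟩) ⟨lift_injective _ hd, fun x => by
    obtain ⟨a, b, rfl⟩ := hgen x
    exact ⟨⟨a, b⟩, by simp⟩⟩

theorem liftRingEquiv_sqrtd (hd : ∀ n : ℤ, d ≠ n * n) {s : A} (hs : s * s = d)
    (hgen : ∀ x : A, ∃ a b : ℤ, x = a + b * s) : liftRingEquiv hd hs hgen sqrtd = s := by
  change lift ⟨s, hs⟩ sqrtd = s
  simp

end Zsqrtd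

open Zsqrtd in
theorem exists_quotientSpanNat_ringEquiv_quadraticAlgebra {A : Type*} [CommRing A] [CharZero A]
    {d : ℤ} (hd : ∀ n : ℤ, d ≠ n * n) {s : A} (hs : s * s = d)
    (hgen : ∀ x : A, ∃ a b : ℤ, x = a + b * s) (N : ℕ) {a : ZMod N} (ha : (d : ZMod N) = a) :
    ∃ e : A ⧸ Ideal.span {(N : A)} ≃+* QuadraticAlgebra (ZMod N) a 0,
      e (Ideal.Quotient.mk _ s) = ω := by
  set f := liftRingEquiv hd hs hgen
  have hspan : Ideal.span {(N : ℤ√d)} = (Ideal.span {(N : A)}).map (f.symm : A →+* ℤ√d) := by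
    rw [Ideal.map_span, Set.image_singleton, map_natCast]
  refine ⟨(Ideal.quotientEquiv _ _ f.symm hspan).trans (quotientSpanNatEquiv N ha), ?_⟩
  have hs' : f.symm s = sqrtd := f.symm_apply_eq.mpr (liftRingEquiv_sqrtd hd hs hgen).symm
  rw [RingEquiv.trans_apply, Ideal.quotientEquiv_mk, hs', quotientSpanNatEquiv_mk,
    reduceMod_apply]
  ext <;> simp

section CommGroup

open Subgroup

variable {G : Type*} [CommGroup G]

noncomputable def zmodPowHom (g : G) : Multiplicative (ZMod (orderOf g)) →* G :=
  AddMonoidHom.toMultiplicativeLeft <|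
    ZMod.lift _ ⟨zmultiplesHom (Additive G) (Additive.ofMul g), by simp [← ofMul_pow]⟩

theorem zmodPowHom_ofAdd_one (g : G) : zmodPowHom g (Multiplicative.ofAdd 1) = g := by
  rw [zmodPowHom, AddMonoidHom.toMultiplicativeLeft_apply_apply, toAdd_ofAdd,
    ← Int.cast_one, ZMod.lift_coe]
  simp

theorem nonempty_mulEquiv_zmod_prod_of_closure_pair_eq_top [Finite G] {a b : G} {m n : ℕ}
    (ha : orderOf a = m) (hb : orderOf b = n) (hclosure : closure {a, b} = ⊤)
    (hcard : Nat.card G = m * n) :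
    Nonempty (G ≃* Multiplicative (ZMod m) × Multiplicative (ZMod n)) := by
  subst ha hb
  have : NeZero (orderOf a) := ⟨(orderOf_pos a).ne'⟩
  have : NeZero (orderOf b) := ⟨(orderOf_pos b).ne'⟩
  set φ := (zmodPowHom a).coprod (zmodPowHom b)
  have hsurj : Function.Surjective φ := by
    rw [← MonoidHom.range_eq_top, eq_top_iff, ← hclosure, closure_le]
    rintro g (rfl | rfl)
    · exact ⟨(Multiplicative.ofAdd 1, 1), by simp [φ, zmodPowHom_ofAdd_one]⟩
    · exact ⟨(1, Multiplicative.ofAdd 1), by simp [φ, zmodPowHom_ofAdd_one]⟩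
  refine ⟨(MulEquiv.ofBijective φ (hsurj.bijective_of_nat_card_le ?_)).symm⟩
  simp [hcard]

end CommGroup

namespace QuadraticAlgebra

instance {R : Type*} [Fintype R] (a b : R) : Fintype (QuadraticAlgebra R a b) :=
  Fintype.ofEquiv (R × R) (equivProd a b).symm

def oneAddOmegaUnit : (QuadraticAlgebra (ZMod 4) 2 0)ˣ := ⟨1 + ω, ω - 1, by decide, by decide⟩

theorem orderOf_oneAddOmegaUnit : orderOf oneAddOmegaUnit = 4 := by
  have : Fact (Nat.Prime 2) := ⟨Nat.prime_two⟩
  exact orderOf_eq_prime_pow (p := 2) (n := 1) (by decide) (by decide)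

theorem orderOf_neg_one_units_zmod_four :
    orderOf (-1 : (QuadraticAlgebra (ZMod 4) 2 0)ˣ) = 2 :=
  orderOf_eq_prime (by decide) (by decide)

theorem closure_oneAddOmegaUnit_neg_one :
    Subgroup.closure {oneAddOmegaUnit, -1} = (⊤ : Subgroup (QuadraticAlgebra (ZMod 4) 2 0)ˣ) := by
  have hgen : ∀ u : (QuadraticAlgebra (ZMod 4) 2 0)ˣ,
      ∃ i : Fin 4, ∃ j : Fin 2, oneAddOmegaUnit ^ (i : ℕ) * (-1) ^ (j : ℕ) = u := by
    decide
  refine eq_top_iff.mpr fun u _ => ?_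
  obtain ⟨i, j, rfl⟩ := hgen u
  exact mul_mem (pow_mem (Subgroup.subset_closure (by simp)) _) (pow_mem (Subgroup.subset_closure (by simp)) _)

theorem card_units_zmod_four : Nat.card (QuadraticAlgebra (ZMod 4) 2 0)ˣ = 8 := by
  rw [Nat.card_eq_fintype_card]
  decide

end QuadraticAlgebra

theorem stmt_10 (D : ℕ) (hD8 : D % 8 = 2)
    (K : Type*) [Field K] [NumberField K]
    (s : 𝓞 K) (hs : s ^ 2 = (D : 𝓞 K))
    (hZ : ∀ x : 𝓞 K, ∃ a b : ℤ, x = (a : 𝓞 K) + (b : 𝓞 K) * s) :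
    Nonempty ((𝓞 K ⧸ Ideal.span {(4 : 𝓞 K)})ˣ ≃*
      Multiplicative (ZMod 4) × Multiplicative (ZMod 2)) ∧
    ∃ a b : (𝓞 K ⧸ Ideal.span {(4 : 𝓞 K)})ˣ,
      (a : 𝓞 K ⧸ Ideal.span {(4 : 𝓞 K)})
          = Ideal.Quotient.mk (Ideal.span {(4 : 𝓞 K)}) (1 + s) ∧
      orderOf a = 4 ∧
      (b : 𝓞 K ⧸ Ideal.span {(4 : 𝓞 K)})
          = Ideal.Quotient.mk (Ideal.span {(4 : 𝓞 K)}) (1 + (D : 𝓞 K)) ∧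
      orderOf b = 2 ∧
      Subgroup.closure {a, b} = (⊤ : Subgroup (𝓞 K ⧸ Ideal.span {(4 : 𝓞 K)})ˣ) := by
  have hD4 : (D : ZMod 4) = 2 := by
    rw [← ZMod.natCast_mod, show D % 4 = 2 by omega]
    rfl
  have hD4' : ((D : ℤ) : ZMod 4) = 2 := by rw [Int.cast_natCast, hD4]
  have hs' : s * s = ((D : ℤ) : 𝓞 K) := by rw [← sq, hs, Int.cast_natCast]
  have hquot := exists_quotientSpanNat_ringEquiv_quadraticAlgebra
    (Int.ne_mul_self_of_cast_zmod_four_eq_two hD4') hs' hZ 4 hD4'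
  rw [Nat.cast_ofNat] at hquot
  obtain ⟨e, he⟩ := hquot
  set E := Units.mapEquiv e.symm.toMulEquiv
  obtain ⟨G⟩ := nonempty_mulEquiv_zmod_prod_of_closure_pair_eq_top orderOf_oneAddOmegaUnit
    orderOf_neg_one_units_zmod_four closure_oneAddOmegaUnit_neg_one card_units_zmod_four
  refine ⟨⟨E.symm.trans G⟩, E oneAddOmegaUnit, E (-1), ?_, ?_, ?_, ?_, ?_⟩
  · rw [Units.coe_mapEquiv, RingEquiv.toMulEquiv_eq_coe, RingEquiv.coe_toMulEquiv,
      RingEquiv.symm_apply_eq, map_add, map_one, map_add, map_one, he]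
    rfl
  · rw [MulEquiv.orderOf_eq, orderOf_oneAddOmegaUnit]
  · rw [Units.coe_mapEquiv, RingEquiv.toMulEquiv_eq_coe, RingEquiv.coe_toMulEquiv,
      RingEquiv.symm_apply_eq, map_add, map_one, map_natCast]
    ext <;> simp [hD4, show (1 + 2 : ZMod 4) = -1 from rfl]
  · rw [MulEquiv.orderOf_eq, orderOf_neg_one_units_zmod_four]
  · have h := MonoidHom.map_closure E.toMonoidHom {oneAddOmegaUnit, -1}
    rw [closure_oneAddOmegaUnit_neg_one, Subgroup.map_top_of_surjective E.toMonoidHom E.surjective,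
      MulEquiv.coe_toMonoidHom, Set.image_pair] at h
    exact h.symm
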